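/- arXiv:2004.08663 — 4 statements merged into one kernel-verified Lean document; each statement's English description precedes it below -/
import Mathlib

section
/- The function λ(t) = (1/6)·ln((λ₀/U₀)·(tanh(√(3λ₀)(t-t₀))² - 1)) satisfies 3(λ'(t))² - U₀·e^{6λ(t)} = λ₀ for all t where it is defined, assuming λ₀ > 0 and λ₀/U₀·(tanh²-1) > 0 on the domain. -/
/-!
Since `(tanh² - 1)' = 2 tanh · (1 - tanh²)`, the logarithmic derivative of `c (tanh² y - 1)` is
`-2 tanh y`; with `a = √(3λ₀)` this gives `λ' = -(a/3) tanh (a (t - t₀))`, while `e^{6λ}` is the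
argument of the logarithm itself. The energy then reduces to `λ₀ tanh² - λ₀ (tanh² - 1) = λ₀`.
-/

open Real

theorem Real.hasDerivAt_tanh (x : ℝ) : HasDerivAt tanh (1 - tanh x ^ 2) x := by
  have hcosh : cosh x ≠ 0 := (cosh_pos x).ne'
  have h := (hasDerivAt_sinh x).div (hasDerivAt_cosh x) hcosh
  rw [show sinh / cosh = tanh from funext fun y => (tanh_eq_sinh_div_cosh y).symm] at h
  refine h.congr_deriv ?_
  rw [tanh_eq_sinh_div_cosh]
  field_simp

theorem hasDerivAt_log_mul_tanh_sq_sub_one {c : ℝ} (hc : c ≠ 0) (x : ℝ) :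
    HasDerivAt (fun y => log (c * (tanh y ^ 2 - 1))) (-2 * tanh x) x := by
  have hsech : tanh x ^ 2 - 1 ≠ 0 := by linarith [tanh_sq_lt_one x]
  have h : HasDerivAt (fun y => log (c * (tanh y ^ 2 - 1)))
      (c * (2 * tanh x * (1 - tanh x ^ 2)) / (c * (tanh x ^ 2 - 1))) x := by
    simpa using ((((hasDerivAt_tanh x).pow 2).sub_const 1).const_mul c).log (mul_ne_zero hc hsech)
  refine h.congr_deriv ?_
  field_simp
  ring

theorem stmt_2_general (lam₀ U₀ t₀ : ℝ) (hlam₀ : 0 < lam₀)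
    (l : ℝ → ℝ)
    (hl : ∀ t, l t = (1/6) * Real.log ((lam₀ / U₀) *
      ((Real.tanh (Real.sqrt (3 * lam₀) * (t - t₀)))^2 - 1))) :
    ∀ t, 0 < (lam₀ / U₀) * ((Real.tanh (Real.sqrt (3 * lam₀) * (t - t₀)))^2 - 1) →
      3 * (deriv l t)^2 - U₀ * Real.exp (6 * l t) = lam₀ := by
  intro t ht
  set a := √(3 * lam₀)
  have hc : lam₀ / U₀ ≠ 0 := left_ne_zero_of_mul ht.ne'
  have hU₀ : U₀ ≠ 0 := by rintro rfl; simp at hc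
  have hinner : HasDerivAt (fun s => a * (s - t₀)) a t := by
    simpa using ((hasDerivAt_id t).sub_const t₀).const_mul a
  have hderiv : deriv l t = -(a / 3) * tanh (a * (t - t₀)) := by
    have h : HasDerivAt l (1 / 6 * (-2 * tanh (a * (t - t₀)) * a)) t := by
      rw [funext hl]
      exact ((hasDerivAt_log_mul_tanh_sq_sub_one hc _).comp t hinner).const_mul _
    rw [h.deriv]
    ring
  have hexp : exp (6 * l t) = lam₀ / U₀ * (tanh (a * (t - t₀)) ^ 2 - 1) := by
    rw [hl t, ← mul_assoc, show (6 : ℝ) * (1 / 6) = 1 by norm_num, one_mul, exp_log ht]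
  have ha : a ^ 2 = 3 * lam₀ := sq_sqrt (by positivity)
  rw [hderiv, hexp, ← mul_assoc, mul_div_cancel₀ _ hU₀]
  linear_combination tanh (a * (t - t₀)) ^ 2 / 3 * ha

/-- λ(t) = (1/6)·ln((λ₀/U₀)(tanh²(√(3λ₀)(t-t₀)) - 1)) satisfies
3(λ')² - U₀e^{6λ} = λ₀ wherever the argument of the logarithm is positive. -/
theorem stmt_2 (lam₀ U₀ t₀ : ℝ) (hlam₀ : 0 < lam₀) (hU₀ : U₀ < 0)
    (l : ℝ → ℝ)
    (hl : ∀ t, l t = (1/6) * Real.log ((lam₀ / U₀) *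
      ((Real.tanh (Real.sqrt (3 * lam₀) * (t - t₀)))^2 - 1))) :
    ∀ t, 0 < (lam₀ / U₀) * ((Real.tanh (Real.sqrt (3 * lam₀) * (t - t₀)))^2 - 1) →
      3 * (deriv l t)^2 - U₀ * Real.exp (6 * l t) = lam₀ :=
  stmt_2_general lam₀ U₀ t₀ hlam₀ l hl
end

section
/- The functions x(τ) = c₁e^{-3τ} - (μ+2)/√6, Σ₊(τ) = c₂e^{-3τ}, z(τ) = 6/(2√6·c₁(μ+2)e^{-3τ} + 6c₃e^{-6τ} - μ² - 4μ + 2) satisfy the system x' = -√(3/2)(μ+2) - 3x, Σ₊' = -3Σ₊, z' = -z[z(√6(μ+2)x + 6) - 6] on any interval where the denominator of z is nonzero. -/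
/-!
The equation for `z` is of Riccati type, and `z = 6 / D` is the reciprocal substitution that
linearises it: with `q = √6 (μ + 2) x + 6` the constant terms of `D - q` cancel, leaving
`D - q = √6 c₁ (μ + 2) e^{-3τ} + 6 c₃ e^{-6τ}`, so `D' = -6 (D - q)`.
-/

open Real

lemma hasDerivAt_const_mul_exp_mul (a c τ : ℝ) :
    HasDerivAt (fun t => c * exp (a * t)) (a * (c * exp (a * τ))) τ :=
  ((((hasDerivAt_id τ).const_mul a).exp).const_mul c).congr_deriv (by simp only [id_eq, mul_one]; ring)

lemma HasDerivAt.const_div_riccati {D : ℝ → ℝ} {a q τ : ℝ}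
    (hD : HasDerivAt D (-a * (D τ - q)) τ) (hτ : D τ ≠ 0) :
    HasDerivAt (fun t => a / D t) (-(a / D τ) * (a / D τ * q - a)) τ :=
  ((hasDerivAt_const τ a).div hD hτ).congr_deriv (by field_simp; ring)

lemma sqrt_three_div_two_eq : √(3 / 2) = 3 / √6 := by
  rw [eq_div_iff (by positivity), ← sqrt_mul (by norm_num),
    show (3 / 2 * 6 : ℝ) = 3 ^ 2 by norm_num, sqrt_sq (by norm_num)]

/-- The explicit functions x, Σ₊, z solve the alternative system wherever the
denominator of z is nonzero. -/
theorem stmt_13 (μ c₁ c₂ c₃ : ℝ)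
    (x Sp z D : ℝ → ℝ)
    (hx : ∀ τ, x τ = c₁ * Real.exp (-3 * τ) - (μ + 2) / Real.sqrt 6)
    (hSp : ∀ τ, Sp τ = c₂ * Real.exp (-3 * τ))
    (hD : ∀ τ, D τ = 2 * Real.sqrt 6 * c₁ * (μ + 2) * Real.exp (-3 * τ)
        + 6 * c₃ * Real.exp (-6 * τ) - μ^2 - 4 * μ + 2)
    (hz : ∀ τ, z τ = 6 / D τ) :
    ∀ τ, D τ ≠ 0 →
      HasDerivAt x (-Real.sqrt (3/2) * (μ + 2) - 3 * x τ) τ ∧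
      HasDerivAt Sp (-3 * Sp τ) τ ∧
      HasDerivAt z (-(z τ) * (z τ * (Real.sqrt 6 * (μ + 2) * x τ + 6) - 6)) τ := by
  intro τ hτ
  rw [funext hx, funext hSp, funext hz]
  refine ⟨?_, hasDerivAt_const_mul_exp_mul (-3) c₂ τ, ?_⟩
  · refine ((hasDerivAt_const_mul_exp_mul (-3) c₁ τ).sub_const ((μ + 2) / √6)).congr_deriv ?_
    rw [sqrt_three_div_two_eq]
    field_simp
    ring
  · apply HasDerivAt.const_div_riccati _ hτ
    rw [funext hD]
    refine ((((hasDerivAt_const_mul_exp_mul (-3) (2 * √6 * c₁ * (μ + 2)) τ).add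
      (hasDerivAt_const_mul_exp_mul (-6) (6 * c₃) τ)).sub_const (μ ^ 2)).sub_const (4 * μ)
      |>.add_const 2).congr_deriv ?_
    field_simp
    ring
end

section
/- The point P_B = (x,Σ₊,z) = (-(μ+2)/√6, 0, -6/(μ(μ+4)-2)) is an equilibrium point of the system x' = -√(3/2)(μ+2)-3x, Σ₊' = -3Σ₊, z' = -z[z(√6(μ+2)x+6)-6], and the Jacobian there has eigenvalues -6, -3, -3; hence P_B is a hyperbolic sink. -/
/-!
The `x`- and `Σ₊`-equations are affine and do not involve the other variables, so at every point
the Jacobian is lower triangular with diagonal `-3, -3, ∂z'/∂z`, where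
`∂z'/∂z = 6 - 2 z (√6 (μ + 2) x + 6)`. At `P_B` one has `√6 (μ + 2) x + 6 = -(μ (μ + 4) - 2)`,
so `z (√6 (μ + 2) x + 6) = 6`: this makes `z' = 0` and `∂z'/∂z = -6`.
-/

open Polynomial Real

theorem Matrix.charpoly_of_isLowerTriangular {n R : Type*} [CommRing R] [Fintype n]
    [DecidableEq n] [LinearOrder n] (M : Matrix n n R) (h : M.IsLowerTriangular) :
    M.charpoly = ∏ i : n, (X - C (M i i)) := by
  rw [← charpoly_transpose]
  exact charpoly_of_isUpperTriangular _ h.transpose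

theorem hasDerivAt_update_apply {𝕜 ι : Type*} [NontriviallyNormedField 𝕜] [DecidableEq ι]
    (p : ι → 𝕜) (i j : ι) (y : 𝕜) :
    HasDerivAt (fun s => Function.update p j s i) ((Pi.single j 1 : ι → 𝕜) i) y :=
  hasDerivAt_pi.1 (hasDerivAt_update p j y) i

noncomputable def alternativeField (μ : ℝ) (v : Fin 3 → ℝ) : Fin 3 → ℝ := ![
  -√(3/2) * (μ + 2) - 3 * v 0,
  -3 * v 1,
  -(v 2) * (v 2 * (√6 * (μ + 2) * v 0 + 6) - 6)]

noncomputable def pointB (μ : ℝ) : Fin 3 → ℝ :=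
  ![-(μ + 2) / √6, 0, -6 / (μ * (μ + 4) - 2)]

theorem deriv_alternativeField_update_of_ne_two (μ : ℝ) (p : Fin 3 → ℝ) {i : Fin 3}
    (hi : i ≠ 2) (j : Fin 3) :
    deriv (fun s => alternativeField μ (Function.update p j s) i) (p j) =
      -3 * (Pi.single j 1 : Fin 3 → ℝ) i := by
  fin_cases i
  · have := ((hasDerivAt_update_apply p 0 j (p j)).const_mul (-3)).const_add
      (-√(3/2) * (μ + 2))
    simpa [alternativeField, sub_eq_add_neg, neg_mul] using this.deriv
  · exact ((hasDerivAt_update_apply p 1 j (p j)).const_mul (-3)).deriv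
  · exact absurd rfl hi

theorem deriv_alternativeField_update_two_two (μ : ℝ) (p : Fin 3 → ℝ) :
    deriv (fun s => alternativeField μ (Function.update p 2 s) 2) (p 2) =
      6 - 2 * (p 2 * (√6 * (μ + 2) * p 0 + 6)) := by
  set K := √6 * (μ + 2) * p 0 + 6
  have hquad : (fun s => alternativeField μ (Function.update p 2 s) 2) =
      fun s => -K * s ^ 2 + 6 * s := by
    funext s
    simp only [alternativeField, Fin.isValue, ne_eq, Fin.reduceEq, not_false_eq_true,
      Function.update_of_ne, Function.update_self, Matrix.cons_val, K]
    ring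
  have hK : HasDerivAt (fun s => -K * s ^ 2 + 6 * s) (-K * (↑2 * p 2 ^ (2 - 1)) + 6 * 1) (p 2) :=
    ((hasDerivAt_pow 2 (p 2)).const_mul (-K)).fun_add ((hasDerivAt_id (p 2)).const_mul 6)
  rw [hquad, hK.deriv]
  norm_num
  ring

theorem sqrt_three_halves_mul_sqrt_six : √(3/2) * √6 = 3 := by
  rw [← sqrt_mul (by norm_num), show (3/2 : ℝ) * 6 = 3 ^ 2 by norm_num, sqrt_sq (by norm_num)]

theorem pointB_two_mul {μ : ℝ} (hμ : μ * (μ + 4) ≠ 2) :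
    pointB μ 2 * (√6 * (μ + 2) * pointB μ 0 + 6) = 6 := by
  have h6 : √6 ≠ 0 := by positivity
  have hd : μ * (μ + 4) - 2 ≠ 0 := sub_ne_zero.mpr hμ
  simp only [pointB, Matrix.cons_val]
  field_simp
  ring

theorem alternativeField_pointB {μ : ℝ} (hμ : μ * (μ + 4) ≠ 2) :
    alternativeField μ (pointB μ) = 0 := by
  have h6 : √6 ≠ 0 := by positivity
  ext i
  fin_cases i
  · have h32 : √(3/2) = 3 / √6 := eq_div_of_mul_eq h6 sqrt_three_halves_mul_sqrt_six
    simp only [alternativeField, pointB, h32, Matrix.cons_val, Fin.zero_eta, Pi.zero_apply]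
    ring
  · simp [alternativeField, pointB]
  · simp [alternativeField, pointB_two_mul hμ]

/-- P_B = (-(μ+2)/√6, 0, -6/(μ(μ+4)-2)) is an equilibrium of the alternative
system and the Jacobian there has eigenvalues -6, -3, -3; hence it is a
hyperbolic sink (all eigenvalues negative). -/
theorem stmt_14 (μ : ℝ) (hμ : μ * (μ + 4) ≠ 2)
    (f : (Fin 3 → ℝ) → Fin 3 → ℝ)
    (hf : ∀ v, f v = ![
      -Real.sqrt (3/2) * (μ + 2) - 3 * v 0,
      -3 * v 1,
      -(v 2) * (v 2 * (Real.sqrt 6 * (μ + 2) * v 0 + 6) - 6)])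
    (p : Fin 3 → ℝ)
    (hp : p = ![-(μ + 2) / Real.sqrt 6, 0, -6 / (μ * (μ + 4) - 2)])
    (J : Matrix (Fin 3) (Fin 3) ℝ)
    (hJ : ∀ i j, J i j = deriv (fun s => f (Function.update p j s) i) (p j)) :
    f p = 0 ∧ J.charpoly = (X + C 6) * (X + C 3) * (X + C 3) ∧
      ((-6:ℝ) < 0 ∧ (-3:ℝ) < 0) := by
  obtain rfl : f = alternativeField μ := funext hf
  obtain rfl : p = pointB μ := hp
  have hlower : J.IsLowerTriangular := fun i j (hij : i < j) => by
    rw [hJ, deriv_alternativeField_update_of_ne_two μ _ (hij.trans_le (Fin.le_last j)).ne,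
      Pi.single_eq_of_ne hij.ne, mul_zero]
  refine ⟨alternativeField_pointB hμ, ?_, by norm_num, by norm_num⟩
  rw [J.charpoly_of_isLowerTriangular hlower, Fin.prod_univ_three, hJ, hJ, hJ,
    deriv_alternativeField_update_of_ne_two μ _ (by decide),
    deriv_alternativeField_update_of_ne_two μ _ (by decide),
    deriv_alternativeField_update_two_two, pointB_two_mul hμ]
  norm_num [sub_eq_add_neg]
  ring
end

section
/- The functions x₁(τ)=c₁e^{-3τ}-(μ+2)/√6-x_A, x₂(τ)=c₂e^{-3τ}-Σ_{+A}, x₃(τ)=√(2√6c₁(μ+2)e^{-3τ}+6c₃e^{-6τ}-μ²-4μ+2)/√6 satisfy the rescaled center-manifold system x₁' = (1/2)(-√6(μ+2)-6x₁-6x_A), x₂' = -3x₂-3Σ_{+A}, x₃' = (√6(μ+2)x₁+√6(μ+2)x_A - 6x₃² + 6)/(2x₃), on any interval where the radicand is positive. -/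
/-!
Each component is an explicit solution of a decoupled equation. `x₁` and `x₂` are affine in
`e^{-3τ}`, so `x' = -3 (x - x(∞))`. For `x₃ = √(R/6)` the chain rule gives
`x₃' = (R'/6) / (2 x₃)`, and `R'/6` is the stated numerator once `6 x₃² = R` is substituted:
the constant term of `R` is `6 - (μ + 2)²`.
-/

open Real

lemma hasDerivAt_exp_const_mul (k τ : ℝ) :
    HasDerivAt (fun t => exp (k * t)) (k * exp (k * τ)) τ := by
  simpa [mul_comm] using ((hasDerivAt_id τ).const_mul k).exp

lemma HasDerivAt.sqrt_div_sqrt {g : ℝ → ℝ} {g' a τ : ℝ} (hg : HasDerivAt g g' τ)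
    (hpos : 0 < g τ) (ha : 0 < a) :
    HasDerivAt (fun t => √(g t) / √a) (g' / a / (2 * (√(g τ) / √a))) τ := by
  have h := (hg.div_const a).sqrt (div_pos hpos ha).ne'
  simpa only [sqrt_div' _ ha.le] using h

/-- The explicit functions x₁, x₂, x₃ satisfy the rescaled center-manifold
system wherever the radicand is positive. -/
theorem stmt_17 (μ xA SpA c₁ c₂ c₃ : ℝ)
    (x₁ x₂ x₃ R : ℝ → ℝ)
    (hR : ∀ τ, R τ = 2 * Real.sqrt 6 * c₁ * (μ + 2) * Real.exp (-3 * τ)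
        + 6 * c₃ * Real.exp (-6 * τ) - μ^2 - 4 * μ + 2)
    (hx₁ : ∀ τ, x₁ τ = c₁ * Real.exp (-3 * τ) - (μ + 2) / Real.sqrt 6 - xA)
    (hx₂ : ∀ τ, x₂ τ = c₂ * Real.exp (-3 * τ) - SpA)
    (hx₃ : ∀ τ, x₃ τ = Real.sqrt (R τ) / Real.sqrt 6) :
    ∀ τ, 0 < R τ →
      HasDerivAt x₁ ((1/2) * (-Real.sqrt 6 * (μ + 2) - 6 * x₁ τ - 6 * xA)) τ ∧
      HasDerivAt x₂ (-3 * x₂ τ - 3 * SpA) τ ∧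
      HasDerivAt x₃ ((Real.sqrt 6 * (μ + 2) * x₁ τ + Real.sqrt 6 * (μ + 2) * xA
          - 6 * (x₃ τ)^2 + 6) / (2 * x₃ τ)) τ := by
  intro τ hpos
  obtain rfl := funext hx₁
  obtain rfl := funext hx₂
  obtain rfl := funext hx₃
  obtain rfl := funext hR
  have hsqrt6 : √6 ^ 2 = 6 := sq_sqrt (by norm_num)
  have hsqrt6_pos : 0 < √6 := by positivity
  have hE₃ := hasDerivAt_exp_const_mul (-3) τ
  have hE₆ := hasDerivAt_exp_const_mul (-6) τ
  refine ⟨?_, ?_, ?_⟩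
  · refine (((hE₃.const_mul c₁).sub_const _).sub_const xA).congr_deriv ?_
    field_simp
    linear_combination (μ + 2) * hsqrt6
  · exact ((hE₃.const_mul c₂).sub_const SpA).congr_deriv (by ring)
  · have hR_deriv := ((((hE₃.const_mul (2 * √6 * c₁ * (μ + 2))).add (hE₆.const_mul (6 * c₃))
      ).sub_const (μ ^ 2)).sub_const (4 * μ)).add_const 2
    refine (hR_deriv.sqrt_div_sqrt hpos (by norm_num)).congr_deriv (congrArg (· / _) ?_)
    rw [div_pow, sq_sqrt hpos.le, hsqrt6]
    field_simp
    ring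
end
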